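/- Let (A,≡) be an equivalence family and col(A,≡) its collapse to a general event structure, with unit map η_A : (A,≡) → (C(col(A,≡)), =) given by η_A(a) = {a}_≡, a map of equivalence families. Then for every general event structure B = (B, Con_B, ⊢_B) and every map of equivalence families g : (A,≡) → (C(B), =), there is a unique map of general event structures k : col(A,≡) → B such that the underlying partial function of k composed with η_A equals g. -/

import Mathlib

/-!
A configuration `y` of `A` collapses to a configuration `y_≡` of `col(A,≡)`: a securing chain
of `y` maps to one of `y_≡`, each step being enabled in the collapse by the configuration formed
by the corresponding prefix of the chain.

Since the target equivalence is equality, a map `g : (A,≡) → (C(B), =)` is constant on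
`≡`-classes and so descends to `k` on classes, necessarily uniquely. Consistency and local
injectivity of `k` come from `g` sending each `y` to a configuration of `B` and locally
reflecting `≡`. For enabling, if `e ∈ y_≡ ⊆ X ∪ {e}` and `k e = b`, then `b` lies in the
configuration `g y`, so it is enabled by a subset of `g y` not containing `b`; every element
of that subset is the image of some event of `y` outside the class `e`, hence lies in `k X`,
and monotonicity of enabling gives `k X ⊢ b`.
-/

universe u v w

/-- The image of a set under a partial function. -/
def pimage {α : Type u} {β : Type v} (f : α → Option β) (x : Set α) : Set β :=
  {b | ∃ a ∈ x, f a = some b}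

/-- A family of configurations over the set of events `A`:
a non-empty family of subsets, whose underlying set is all of `A`,
closed under unions of finitely compatible subfamilies,
and satisfying the securing-chain condition. -/
structure ConfigFamily (A : Type u) where
  F : Set (Set A)
  nonempty : F.Nonempty
  covers : ∀ a : A, ∃ x ∈ F, a ∈ x
  unionClosed : ∀ X ⊆ F, (∀ Y ⊆ X, Y.Finite → ∃ z ∈ F, ∀ y ∈ Y, y ⊆ z) → ⋃₀ X ∈ F
  secured : ∀ x ∈ F, ∀ e ∈ x, ∃ l : List A, l ≠ [] ∧ l.getLast? = some e ∧
    (∀ a ∈ l, a ∈ x) ∧ ∀ i, 0 < i → i ≤ l.length → {a | a ∈ l.take i} ∈ F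

/-- Down-closed subsets w.r.t. a causal dependency relation. -/
def DnClosed {P : Type u} (le : P → P → Prop) (x : Set P) : Prop :=
  ∀ a ∈ x, ∀ b, le b a → b ∈ x

/-- Configurations of a (prime) event structure: down-closed subsets all of
whose finite subsets are consistent. -/
def IsCfg {P : Type u} (le : P → P → Prop) (Con : Set (Set P)) (x : Set P) : Prop :=
  DnClosed le x ∧ ∀ X ⊆ x, X.Finite → X ∈ Con

/-- The set `[p) = [p] \ {p}` of strict causal predecessors. -/
def strictPred {P : Type u} (le : P → P → Prop) (p : P) : Set P :=
  {p' | le p' p ∧ p' ≠ p}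

/-- The data of a prime event structure with equivalence (ese). -/
structure ESEData (P : Type u) where
  le : P → P → Prop
  Con : Set (Set P)
  eqv : P → P → Prop

/-- The axioms of a prime event structure with equivalence. -/
structure IsESE {P : Type u} (D : ESEData P) : Prop where
  le_refl : ∀ a, D.le a a
  le_trans : ∀ a b c, D.le a b → D.le b c → D.le a c
  le_antisymm : ∀ a b, D.le a b → D.le b a → a = b
  finCause : ∀ e, {e' | D.le e' e}.Finite
  con_fin : ∀ X ∈ D.Con, X.Finite
  con_single : ∀ e, ({e} : Set P) ∈ D.Con
  con_mono : ∀ X Y, X ⊆ Y → Y ∈ D.Con → X ∈ D.Con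
  con_le : ∀ X ∈ D.Con, ∀ e e', D.le e e' → e' ∈ X → X ∪ {e} ∈ D.Con
  eqv_equiv : Equivalence D.eqv

/-- The configurations of an ese. -/
def Cfgs {P : Type u} (D : ESEData P) : Set (Set P) := {x | IsCfg D.le D.Con x}

/-- A partial function preserves the equivalences: equivalent elements are
either both sent to nothing, or both to defined, equivalent results. -/
def PreservesEqv {α : Type u} {β : Type v} (eA : α → α → Prop) (eB : β → β → Prop)
    (f : α → Option β) : Prop :=
  ∀ a₁ a₂, eA a₁ a₂ → (f a₁ = none ∧ f a₂ = none) ∨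
    ∃ b₁ b₂, f a₁ = some b₁ ∧ f a₂ = some b₂ ∧ eB b₁ b₂

/-- A map of equivalence families (given by their families of configurations
and equivalences): a partial function which preserves the equivalence, sends
configurations to configurations, and locally reflects the equivalence. -/
def IsEFMap {α : Type u} {β : Type v} (FA : Set (Set α)) (eA : α → α → Prop)
    (FB : Set (Set β)) (eB : β → β → Prop) (f : α → Option β) : Prop :=
  PreservesEqv eA eB f ∧ ∀ x ∈ FA, pimage f x ∈ FB ∧
    ∀ a₁ ∈ x, ∀ a₂ ∈ x, ∀ b₁ b₂, f a₁ = some b₁ → f a₂ = some b₂ → eB b₁ b₂ → eA a₁ a₂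

/-- A map of ese's: a map of equivalence families between the families of
configurations with their equivalences. -/
def IsESEMap {P : Type u} {Q : Type v} (DP : ESEData P) (DQ : ESEData Q)
    (f : P → Option Q) : Prop :=
  IsEFMap (Cfgs DP) DP.eqv (Cfgs DQ) DQ.eqv f

/-- Equivalence of partial maps: equidefined with equivalent results. -/
def MapEqv {α : Type u} {β : Type v} (eB : β → β → Prop) (f g : α → Option β) : Prop :=
  ∀ a, (f a = none ∧ g a = none) ∨ ∃ b₁ b₂, f a = some b₁ ∧ g a = some b₂ ∧ eB b₁ b₂

/-- The data of a general event structure. -/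
structure GESData (E : Type u) where
  Con : Set (Set E)
  en : Set E → E → Prop

/-- The axioms of a general event structure. -/
structure IsGES {E : Type u} (D : GESData E) : Prop where
  con_nonempty : D.Con.Nonempty
  con_fin : ∀ X ∈ D.Con, X.Finite
  con_mono : ∀ X Y, X ⊆ Y → Y ∈ D.Con → X ∈ D.Con
  en_con : ∀ X e, D.en X e → X ∈ D.Con
  en_mono : ∀ X Y e, D.en X e → X ⊆ Y → Y ∈ D.Con → D.en Y e

/-- Configurations of a general event structure: consistent, secured subsets. -/
def GESCfg {E : Type u} (D : GESData E) (x : Set E) : Prop :=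
  (∀ X ⊆ x, X.Finite → X ∈ D.Con) ∧
  ∀ e ∈ x, ∃ l : List E, l ≠ [] ∧ l.getLast? = some e ∧ (∀ a ∈ l, a ∈ x) ∧
    ∀ (i : ℕ) (h : i < l.length), D.en {a | a ∈ l.take i} (l.get ⟨i, h⟩)

/-- A map of general event structures. -/
def IsGESMap {E : Type u} {E' : Type v} (D : GESData E) (D' : GESData E')
    (f : E → Option E') : Prop :=
  (∀ X ∈ D.Con, pimage f X ∈ D'.Con) ∧
  (∀ X ∈ D.Con, ∀ a₁ ∈ X, ∀ a₂ ∈ X, ∀ b, f a₁ = some b → f a₂ = some b → a₁ = a₂) ∧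
  (∀ X e, D.en X e → ∀ b, f e = some b → D'.en (pimage f X) b)

/-- Consistency of the collapse: finite subsets of `y_≡` for `y` in the family. -/
def colCon {A : Type u} (C : ConfigFamily A) (eqA : A → A → Prop) : Set (Set (Quot eqA)) :=
  {X | X.Finite ∧ ∃ y ∈ C.F, X ⊆ Quot.mk eqA '' y}

/-- Enabling of the collapse: `X ⊢ e` iff `X` is consistent and
`e ∈ y_≡ ⊆ X ∪ {e}` for some `y` in the family. -/
def colEn {A : Type u} (C : ConfigFamily A) (eqA : A → A → Prop)
    (X : Set (Quot eqA)) (e : Quot eqA) : Prop :=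
  X ∈ colCon C eqA ∧ ∃ y ∈ C.F, e ∈ Quot.mk eqA '' y ∧ Quot.mk eqA '' y ⊆ X ∪ {e}

/-- The collapse of an equivalence family to a general event structure, whose
events are the equivalence classes. -/
def colGES {A : Type u} (C : ConfigFamily A) (eqA : A → A → Prop) : GESData (Quot eqA) :=
  { Con := colCon C eqA, en := colEn C eqA }

open Set

theorem pimage_some {α : Type u} {β : Type v} (f : α → β) (x : Set α) :
    pimage (fun a => some (f a)) x = f '' x := by
  ext b
  simp [pimage]

theorem Set.Finite.pimage {α : Type u} {β : Type v} (f : α → Option β) {X : Set α}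
    (hX : X.Finite) : (_root_.pimage f X).Finite :=
  ((hX.image f).preimage (Option.some_injective β).injOn).subset
    fun _ ⟨a, ha, hab⟩ => ⟨a, ha, hab⟩

theorem PreservesEqv.eq_of_rel {α : Type u} {β : Type v} {eA : α → α → Prop}
    {f : α → Option β} (hf : PreservesEqv eA (· = ·) f) {a₁ a₂ : α} (h : eA a₁ a₂) :
    f a₁ = f a₂ := by
  rcases hf a₁ a₂ h with ⟨h₁, h₂⟩ | ⟨b₁, b₂, h₁, h₂, rfl⟩ <;> rw [h₁, h₂]

theorem List.mem_take_add_one_iff {α : Type u} {l : List α} {i : ℕ} (hi : i < l.length) {a : α} :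
    a ∈ l.take (i + 1) ↔ a ∈ l.take i ∨ a = l[i] := by
  rw [List.take_add_one, List.getElem?_eq_getElem hi, List.mem_append]
  simp

theorem GESCfg.exists_en_of_mem {E : Type u} {D : GESData E} {x : Set E} (hx : GESCfg D x)
    {e : E} (he : e ∈ x) : ∃ Y ⊆ x, e ∉ Y ∧ D.en Y e := by
  classical
  obtain ⟨l, -, hlast, hlx, hsteps⟩ := hx.2 e he
  have hel : e ∈ l := List.mem_of_getLast? hlast
  have hj := List.idxOf_lt_length_of_mem hel
  refine ⟨{a | a ∈ l.take (l.idxOf e)}, fun a ha => hlx a (List.mem_of_mem_take ha),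
    fun h => (lt_irrefl _) ((List.mem_take_iff_idxOf_lt hel).mp h), ?_⟩
  simpa [List.getElem_idxOf hj] using hsteps _ hj

section Collapse

variable {A : Type u} {C : ConfigFamily A} {eqA : A → A → Prop}

theorem gesCfg_colGES_image {x : Set A} (hx : x ∈ C.F) :
    GESCfg (colGES C eqA) (Quot.mk eqA '' x) := by
  refine ⟨fun X hX hXfin => ⟨hXfin, x, hx, hX⟩, ?_⟩
  rintro _ ⟨a, hax, rfl⟩
  obtain ⟨l, hne, hlast, hlx, hpref⟩ := C.secured x hx a hax
  refine ⟨l.map (Quot.mk eqA), by simpa using hne, by simp [hlast],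
    List.forall_mem_map.mpr fun a' ha' => mem_image_of_mem _ (hlx a' ha'), fun i hi => ?_⟩
  have hil : i < l.length := by simpa using hi
  have hprefix : {q | q ∈ (l.map (Quot.mk eqA)).take i} = Quot.mk eqA '' {a | a ∈ l.take i} := by
    ext q
    simp [← List.map_take]
  refine ⟨⟨List.finite_toSet _, x, hx, ?_⟩, {a | a ∈ l.take (i + 1)}, hpref _ i.succ_pos hil,
    ⟨l[i], (List.mem_take_add_one_iff hil).mpr (Or.inr rfl), by simp⟩, ?_⟩
  · rw [hprefix]
    exact image_mono fun a ha => hlx a (List.mem_of_mem_take ha)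
  · rintro _ ⟨a', ha', rfl⟩
    rw [hprefix]
    rcases (List.mem_take_add_one_iff hil).mp ha' with ha' | rfl
    · exact Or.inl ⟨a', ha', rfl⟩
    · exact Or.inr (by simp)

theorem isEFMap_unit (C : ConfigFamily A) (heq : Equivalence eqA) :
    IsEFMap C.F eqA {x | GESCfg (colGES C eqA) x} (· = ·) (fun a => some (Quot.mk eqA a)) := by
  refine ⟨fun a₁ a₂ h => Or.inr ⟨_, _, rfl, rfl, Quot.sound h⟩, fun x hx => ⟨?_, ?_⟩⟩
  · rw [mem_ofPred_eq, pimage_some]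
    exact gesCfg_colGES_image hx
  · rintro a₁ - a₂ - _ _ ⟨⟩ ⟨⟩ h
    exact heq.eqvGen_iff.mp (Quot.eq.mp h)

variable {Bt : Type v} {DB : GESData Bt} {g : A → Option Bt}
  (hg : IsEFMap C.F eqA {x | GESCfg DB x} (· = ·) g) (hc : ∀ a₁ a₂, eqA a₁ a₂ → g a₁ = g a₂)

include hg in
theorem pimage_lift_mem_colCon {X : Set (Quot eqA)} (hX : X ∈ colCon C eqA) :
    pimage (Quot.lift g hc) X ∈ DB.Con := by
  obtain ⟨hXfin, y, hy, hXy⟩ := hX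
  refine (hg.2 y hy).1.1 _ ?_ (hXfin.pimage _)
  rintro b ⟨e, heX, hb⟩
  obtain ⟨a, hay, rfl⟩ := hXy heX
  exact ⟨a, hay, hb⟩

include hg in
theorem lift_injOn_colCon {X : Set (Quot eqA)} (hX : X ∈ colCon C eqA) {e₁ e₂ : Quot eqA}
    (h₁ : e₁ ∈ X) (h₂ : e₂ ∈ X) {b : Bt} (hb₁ : Quot.lift g hc e₁ = some b)
    (hb₂ : Quot.lift g hc e₂ = some b) : e₁ = e₂ := by
  obtain ⟨-, y, hy, hXy⟩ := hX
  obtain ⟨a₁, ha₁, rfl⟩ := hXy h₁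
  obtain ⟨a₂, ha₂, rfl⟩ := hXy h₂
  exact Quot.sound ((hg.2 y hy).2 a₁ ha₁ a₂ ha₂ b b hb₁ hb₂ rfl)

include hg in
theorem en_pimage_lift_of_colEn (hB : IsGES DB) {X : Set (Quot eqA)} {e : Quot eqA} (hen : colEn C eqA X e)
    {b : Bt} (hb : Quot.lift g hc e = some b) : DB.en (pimage (Quot.lift g hc) X) b := by
  obtain ⟨hX, y, hy, ⟨a, hay, rfl⟩, hyX⟩ := hen
  obtain ⟨Y, hYy, hbY, hYb⟩ := (hg.2 y hy).1.exists_en_of_mem ⟨a, hay, hb⟩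
  refine hB.en_mono _ _ _ hYb (fun b' hb' => ?_) (pimage_lift_mem_colCon hg hc hX)
  obtain ⟨a', ha'y, hga'⟩ := hYy hb'
  rcases hyX ⟨a', ha'y, rfl⟩ with h | h
  · exact ⟨_, h, hga'⟩
  · have hga'b : g a' = some b := (congrArg (Quot.lift g hc) (mem_singleton_iff.mp h)).trans hb
    exact (hbY (Option.some_inj.mp (hga'.symm.trans hga'b) ▸ hb')).elim

include hg in
theorem isGESMap_lift (hB : IsGES DB) : IsGESMap (colGES C eqA) DB (Quot.lift g hc) :=
  ⟨fun _ hX => pimage_lift_mem_colCon hg hc hX,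
    fun _ hX _ h₁ _ h₂ _ hb₁ hb₂ => lift_injOn_colCon hg hc hX h₁ h₂ hb₁ hb₂,
    fun _ _ hen _ hb => en_pimage_lift_of_colEn hg hc hB hen hb⟩

end Collapse

/-- The universal property of the collapse: the unit `η(a) = {a}_≡` is a map
of equivalence families from `(A,≡)` to the configurations of `col(A,≡)` with
identity equivalence, and every map of equivalence families from `(A,≡)` to
the configurations of a general event structure `B` factors uniquely through
it via a map of general event structures `k : col(A,≡) → B`. -/
theorem stmt14 {A : Type u} (C : ConfigFamily A) (eqA : A → A → Prop)
    (heq : Equivalence eqA) :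
    IsEFMap C.F eqA {x | GESCfg (colGES C eqA) x} (· = ·)
      (fun a => some (Quot.mk eqA a)) ∧
    ∀ (Bt : Type v) (DB : GESData Bt), IsGES DB →
      ∀ g : A → Option Bt, IsEFMap C.F eqA {x | GESCfg DB x} (· = ·) g →
        ∃! k : Quot eqA → Option Bt,
          IsGESMap (colGES C eqA) DB k ∧ ∀ a, g a = k (Quot.mk eqA a) := by
  refine ⟨isEFMap_unit C heq, fun Bt DB hB g hg => ?_⟩
  have hc : ∀ a₁ a₂, eqA a₁ a₂ → g a₁ = g a₂ := fun _ _ h => hg.1.eq_of_rel h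
  refine ⟨Quot.lift g hc, ⟨isGESMap_lift hg hc hB, fun _ => rfl⟩, ?_⟩
  rintro k ⟨-, hk⟩
  funext q
  induction q using Quot.ind with
  | mk a => exact (hk a).symm
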